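/- Let (S,R) be an argumentation network, V₀ : S → [0,1] an initial assignment, and (V_i) the Gabbay-Rodrigues iteration sequence from V₀; suppose that for every Z ∈ S the sequence V_i(Z) converges to a limit V_e(Z). Let λ : S → {in, out, und} be a legal labelling. Take any X ∈ S. If V_e and λ agree on the values of all nodes in Att(X), then V_e and λ agree on the value of X. -/

import Mathlib

open Filter Topology

variable {S : Type*}

/-- Maximum of `V` over the attackers of `X` (i.e. `{Y | R Y X}`),
with the convention that the maximum over the empty set is `0`. -/
noncomputable def attMax [Fintype S] (R : S → S → Prop) [DecidableRel R] (V : S → ℝ) (X : S) : ℝ :=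
  (Finset.univ.filter (fun Y => R Y X)).fold max 0 V

/-- One step of the Gabbay-Rodrigues iteration. -/
noncomputable def grStep [Fintype S] (R : S → S → Prop) [DecidableRel R] (V : S → ℝ) (X : S) : ℝ :=
  (1 - V X) * min (1/2) (1 - attMax R V X) + V X * max (1/2) (1 - attMax R V X)

/-- The Gabbay-Rodrigues iteration sequence from the initial assignment `V0`. -/
noncomputable def grSeq [Fintype S] (R : S → S → Prop) [DecidableRel R] (V0 : S → ℝ) : ℕ → S → ℝ
  | 0 => V0
  | i + 1 => grStep R (grSeq R V0 i)

def inSet (V : S → ℝ) : Set S := {X | V X = 1}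

def outSet (V : S → ℝ) : Set S := {X | V X = 0}

def conflictFree (R : S → S → Prop) (E : Set S) : Prop := ∀ X ∈ E, ∀ Y ∈ E, ¬ R X Y

def acceptable (R : S → S → Prop) (E : Set S) (X : S) : Prop := ∀ Y, R Y X → ∃ Z ∈ E, R Z Y

def admissible (R : S → S → Prop) (E : Set S) : Prop :=
  conflictFree R E ∧ ∀ X ∈ E, acceptable R E X

def completeExt (R : S → S → Prop) (E : Set S) : Prop :=
  admissible R E ∧ ∀ X, acceptable R E X → X ∈ E

/-- `E⁺` : the set of arguments attacked by `E`. -/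
def plusSet (R : S → S → Prop) (E : Set S) : Set S := {X | ∃ Y ∈ E, R Y X}

/-- The GR sequence is stable at iteration `k` if every node with a crisp value at
iteration `k` keeps that value at iteration `k+1`. -/
def grStable [Fintype S] (R : S → S → Prop) [DecidableRel R] (V0 : S → ℝ) (k : ℕ) : Prop :=
  ∀ X : S, (grSeq R V0 k X = 0 ∨ grSeq R V0 k X = 1) → grSeq R V0 (k + 1) X = grSeq R V0 k X

inductive Lab : Type
  | inn : Lab
  | out : Lab
  | und : Lab

/-- A labelling `lam` is legal. -/
def legalLab (R : S → S → Prop) (lam : S → Lab) : Prop :=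
  ∀ X : S,
    (lam X = Lab.inn → ∀ Y, R Y X → lam Y = Lab.out) ∧
    (lam X = Lab.out → ∃ Y, R Y X ∧ lam Y = Lab.inn) ∧
    (lam X = Lab.und →
      (∀ Y, R Y X → lam Y ≠ Lab.inn) ∧ (∃ Y, R Y X ∧ lam Y ≠ Lab.out))

/-- An assignment `V` and a labelling `lam` agree on the value of the node `X`. -/
def agreesAt (V : S → ℝ) (lam : S → Lab) (X : S) : Prop :=
  (V X = 1 ↔ lam X = Lab.inn) ∧ (V X = 0 ↔ lam X = Lab.out) ∧
  (V X = 1/2 ↔ lam X = Lab.und)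

/-! A limit `Ve` of the iteration is a fixed point of the continuous map `grStep R`. At a fixed
point, the value of a node is pinned down by the maximum `m` over its attackers, and equals
`1 - m` whenever `m ∈ {0, 1/2, 1}`. Reading the labels in, out, und as the values 1, 0, 1/2,
legality of `λ` says precisely that the maximum of these values over the attackers of `X` is
one minus the value of `X`; since `Ve` agrees with `λ` on the attackers, `Ve X` is that value. -/

section attMax

variable [Fintype S] (R : S → S → Prop) [DecidableRel R]

theorem attMax_nonneg (V : S → ℝ) (X : S) : 0 ≤ attMax R V X :=
  Finset.le_fold_max _ |>.2 (Or.inl le_rfl)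

theorem le_attMax {V : S → ℝ} {X Y : S} (h : R Y X) : V Y ≤ attMax R V X :=
  Finset.le_fold_max _ |>.2 (Or.inr ⟨Y, by simpa using h, le_rfl⟩)

theorem attMax_le_iff {V : S → ℝ} {X : S} {c : ℝ} (hc : 0 ≤ c) :
    attMax R V X ≤ c ↔ ∀ Y, R Y X → V Y ≤ c := by
  simp [attMax, Finset.fold_max_le, hc]

theorem attMax_congr {V W : S → ℝ} {X : S} (h : ∀ Y, R Y X → V Y = W Y) :
    attMax R V X = attMax R W X :=
  Finset.fold_congr fun Y hY => h Y (by simpa using hY)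

theorem continuous_attMax (X : S) : Continuous fun V : S → ℝ => attMax R V X := by
  classical
  unfold attMax
  induction Finset.univ.filter (fun Y => R Y X) using Finset.induction with
  | empty => exact continuous_const
  | insert Y s hY ih =>
    simp only [Finset.fold_insert hY]
    exact (continuous_apply Y).max ih

end attMax

section grStep

variable [Fintype S] (R : S → S → Prop) [DecidableRel R]

theorem continuous_grStep : Continuous (grStep R) := by
  refine continuous_pi fun X => ?_
  have hM := continuous_attMax R X
  unfold grStep
  fun_prop

theorem grSeq_eq_iterate (V0 : S → ℝ) (n : ℕ) : grSeq R V0 n = (grStep R)^[n] V0 := by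
  induction n with
  | zero => rfl
  | succ n ih => rw [Function.iterate_succ_apply', ← ih, grSeq]

theorem isFixedPt_grStep_of_tendsto_grSeq {V0 Ve : S → ℝ}
    (h : ∀ Z, Tendsto (fun i => grSeq R V0 i Z) atTop (𝓝 (Ve Z))) :
    Function.IsFixedPt (grStep R) Ve := by
  refine isFixedPt_of_tendsto_iterate (x := V0) ?_ (continuous_grStep R).continuousAt
  simpa only [← grSeq_eq_iterate] using tendsto_pi_nhds.2 h

theorem apply_eq_one_sub_attMax_of_isFixedPt {V : S → ℝ} (hV : Function.IsFixedPt (grStep R) V)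
    {X : S} (hm : attMax R V X = 0 ∨ attMax R V X = 1/2 ∨ attMax R V X = 1) :
    V X = 1 - attMax R V X := by
  have hX := congrFun hV X
  unfold grStep at hX
  rcases hm with hm | hm | hm <;> rw [hm] at hX ⊢ <;> norm_num at hX ⊢ <;> linarith

end grStep

section labelling

noncomputable def Lab.toReal : Lab → ℝ
  | .inn => 1
  | .out => 0
  | .und => 1/2

@[simp] theorem Lab.toReal_inn : Lab.inn.toReal = 1 := rfl

@[simp] theorem Lab.toReal_out : Lab.out.toReal = 0 := rfl

@[simp] theorem Lab.toReal_und : Lab.und.toReal = 1/2 := rfl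

theorem Lab.toReal_le_one (l : Lab) : l.toReal ≤ 1 := by
  cases l <;> norm_num

theorem agreesAt_iff {V : S → ℝ} {lam : S → Lab} {X : S} :
    agreesAt V lam X ↔ V X = (lam X).toReal := by
  refine ⟨fun h => ?_, fun h => ?_⟩
  · cases hX : lam X
    exacts [h.1.2 hX, h.2.1.2 hX, h.2.2.2 hX]
  · rw [agreesAt, h]
    cases lam X <;> norm_num <;> exact ⟨nofun, nofun⟩

theorem legalLab.attMax_toReal [Fintype S] {R : S → S → Prop} [DecidableRel R] {lam : S → Lab}
    (hlam : legalLab R lam) (X : S) :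
    attMax R (fun Y => (lam Y).toReal) X = 1 - (lam X).toReal := by
  obtain ⟨hinn, hout, hund⟩ := hlam X
  cases hX : lam X with
  | inn =>
    refine le_antisymm ((attMax_le_iff R (by norm_num)).2 fun Y hY => ?_) (by simp [attMax_nonneg])
    simp [hinn hX Y hY]
  | out =>
    obtain ⟨Y, hY, hYin⟩ := hout hX
    refine le_antisymm ((attMax_le_iff R (by norm_num)).2 fun Z _ => by simp [Lab.toReal_le_one]) ?_
    simpa [hYin] using le_attMax R (V := fun Y => (lam Y).toReal) hY
  | und =>
    obtain ⟨hnot_in, Y, hY, hYout⟩ := hund hX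
    refine le_antisymm ((attMax_le_iff R (by norm_num)).2 fun Z hZ => ?_) ?_
    · cases hZ' : lam Z with
      | inn => exact absurd hZ' (hnot_in Z hZ)
      | out | und => norm_num [hZ']
    · have hYund : lam Y = .und := by
        cases h : lam Y <;> simp_all
      have := le_attMax R (V := fun Y => (lam Y).toReal) hY
      norm_num [hYund] at this ⊢
      linarith

end labelling

theorem stmt17_general [Fintype S] (R : S → S → Prop) [DecidableRel R]
    (V0 : S → ℝ)
    (Ve : S → ℝ)
    (hconv : ∀ Z : S, Tendsto (fun i => grSeq R V0 i Z) atTop (nhds (Ve Z)))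
    (lam : S → Lab) (hlam : legalLab R lam)
    (X : S) (hagree : ∀ Y, R Y X → agreesAt Ve lam Y) :
    agreesAt Ve lam X := by
  have hfix := isFixedPt_grStep_of_tendsto_grSeq R hconv
  have hmax : attMax R Ve X = 1 - (lam X).toReal :=
    (attMax_congr R fun Y hY => agreesAt_iff.1 (hagree Y hY)).trans (hlam.attMax_toReal X)
  rw [agreesAt_iff, apply_eq_one_sub_attMax_of_isFixedPt R hfix, hmax]
  · ring
  · rw [hmax]; cases lam X <;> norm_num

theorem stmt17 [Fintype S] [Nonempty S] (R : S → S → Prop) [DecidableRel R]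
    (V0 : S → ℝ) (hV0 : ∀ X, V0 X ∈ Set.Icc (0:ℝ) 1)
    (Ve : S → ℝ)
    (hconv : ∀ Z : S, Tendsto (fun i => grSeq R V0 i Z) atTop (nhds (Ve Z)))
    (lam : S → Lab) (hlam : legalLab R lam)
    (X : S) (hagree : ∀ Y, R Y X → agreesAt Ve lam Y) :
    agreesAt Ve lam X :=
  stmt17_general R V0 Ve hconv lam hlam X hagree
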